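/- arXiv:2211.12842 — 2 statements merged into one kernel-verified Lean document; each statement's English description precedes it below -/
import Mathlib

section
/- Let H be a bipartite graph and 𝓗 a two-lift of H. If ex(n, H) = O(n^γ) for some γ > 0, then ex(n, 𝓗) = O(n^((γ+4)/2)), where ex denotes the Turán number for 3-uniform hypergraphs (largest number of edges in an n-vertex 3-graph with no subgraph isomorphic to 𝓗). -/
/-- `H` is contained in `G`: there is an injective (on the support of `H`) homomorphism,
i.e. `G` has a subgraph isomorphic to `H`. -/
def GContains {α β : Type*} (H : SimpleGraph α) (G : SimpleGraph β) : Prop :=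
  ∃ f : α → β, Set.InjOn f {v | ∃ w, H.Adj v w} ∧ ∀ u v, H.Adj u v → G.Adj (f u) (f v)

/-- Containment of 3-uniform hypergraphs (hypergraphs are given by their edge sets;
the embedding is injective on the support). -/
def HContains {α β : Type*} [DecidableEq β] (ℋ : Finset (Finset α))
    (𝒢 : Finset (Finset β)) : Prop :=
  ∃ f : α → β, Set.InjOn f {v | ∃ e ∈ ℋ, v ∈ e} ∧ ∀ e ∈ ℋ, e.image f ∈ 𝒢

/-- The two-lift of a graph `H`: the 3-uniform hypergraph on `{a, b} ∪ V(H)`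
(here `a = inl true`, `b = inl false`) in which every edge contains exactly one of `a, b`,
and the link graphs of both `a` and `b` equal `H`. -/
def twoLift {α : Type*} [Fintype α] [DecidableEq α] (H : SimpleGraph α)
    [DecidableRel H.Adj] : Finset (Finset (Bool ⊕ α)) :=
  (Finset.univ.filter fun p : α × α => H.Adj p.1 p.2).image
      (fun p => ({Sum.inl true, Sum.inr p.1, Sum.inr p.2} : Finset (Bool ⊕ α))) ∪
  (Finset.univ.filter fun p : α × α => H.Adj p.1 p.2).image
      (fun p => ({Sum.inl false, Sum.inr p.1, Sum.inr p.2} : Finset (Bool ⊕ α)))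

open Finset

/-- The common link graph of `a` and `b` in `𝒢`. -/
def linkGraph {n : ℕ} (𝒢 : Finset (Finset (Fin n))) (a b : Fin n) : SimpleGraph (Fin n) where
  Adj y z := y ≠ z ∧ insert a {y, z} ∈ 𝒢 ∧ insert b {y, z} ∈ 𝒢
  symm := by
    refine ⟨?_⟩
    rintro y z ⟨h1, h2, h3⟩
    exact ⟨h1.symm, by rwa [Finset.pair_comm z y], by rwa [Finset.pair_comm z y]⟩
  loopless := ⟨fun y h => h.1 rfl⟩

instance {n : ℕ} (𝒢 : Finset (Finset (Fin n))) (a b : Fin n) :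
    DecidableRel (linkGraph 𝒢 a b).Adj :=
  fun y z => by
    change Decidable (y ≠ z ∧ insert a {y, z} ∈ 𝒢 ∧ insert b {y, z} ∈ 𝒢)
    infer_instance

lemma mem_twoLift {α : Type*} [Fintype α] [DecidableEq α] {H : SimpleGraph α}
    [DecidableRel H.Adj] {e : Finset (Bool ⊕ α)} :
    e ∈ twoLift H ↔ ∃ u v, H.Adj u v ∧
      (e = {Sum.inl true, Sum.inr u, Sum.inr v} ∨
       e = {Sum.inl false, Sum.inr u, Sum.inr v}) := by
  simp only [twoLift, Finset.mem_union, Finset.mem_image, Finset.mem_filter,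
    Finset.mem_univ, true_and, Prod.exists]
  constructor
  · rintro (⟨u, v, h, rfl⟩ | ⟨u, v, h, rfl⟩)
    exacts [⟨u, v, h, Or.inl rfl⟩, ⟨u, v, h, Or.inr rfl⟩]
  · rintro ⟨u, v, h, (rfl | rfl)⟩
    exacts [Or.inl ⟨u, v, h, rfl⟩, Or.inr ⟨u, v, h, rfl⟩]

lemma link_H_free {α : Type*} [Fintype α] [DecidableEq α] (H : SimpleGraph α)
    [DecidableRel H.Adj] {n : ℕ} (𝒢 : Finset (Finset (Fin n)))
    (h3 : ∀ e ∈ 𝒢, e.card = 3) {a b : Fin n} (hab : a ≠ b)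
    (hfree : ¬ HContains (twoLift H) 𝒢) : ¬ GContains H (linkGraph 𝒢 a b) := by
  rintro ⟨f, finj, fhom⟩
  apply hfree
  have havoid : ∀ v, (∃ w, H.Adj v w) → f v ≠ a ∧ f v ≠ b := by
    rintro v ⟨w, hw⟩
    obtain ⟨hne, hea, heb⟩ := fhom v w hw
    constructor
    · intro heq
      have hc := h3 _ hea
      rw [← heq, Finset.insert_idem] at hc
      have hle := Finset.card_insert_le (f v) ({f w} : Finset (Fin n))
      rw [Finset.card_singleton] at hle
      omega
    · intro heq
      have hc := h3 _ heb
      rw [← heq, Finset.insert_idem] at hc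
      have hle := Finset.card_insert_le (f v) ({f w} : Finset (Fin n))
      rw [Finset.card_singleton] at hle
      omega
  have hsup : ∀ v : α, (Sum.inr v ∈ {x : Bool ⊕ α | ∃ e ∈ twoLift H, x ∈ e}) →
      ∃ w, H.Adj v w := by
    rintro v ⟨e, he, hv⟩
    rw [mem_twoLift] at he
    obtain ⟨u, w, huw, (rfl | rfl)⟩ := he <;>
    · simp only [Finset.mem_insert, Finset.mem_singleton] at hv
      rcases hv with h | h | h
      · exact absurd h (by simp)
      · exact ⟨w, (Sum.inr.inj h) ▸ huw⟩
      · exact ⟨u, (Sum.inr.inj h) ▸ huw.symm⟩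
  refine ⟨Sum.elim (fun t => if t then a else b) f, ?_, ?_⟩
  · rintro x hx y hy hxy
    match x, y with
    | Sum.inl c, Sum.inl c' =>
      cases c <;> cases c' <;> simp_all
    | Sum.inl c, Sum.inr v =>
      exfalso
      have hv := havoid v (hsup v hy)
      cases c <;> simp_all
    | Sum.inr v, Sum.inl c =>
      exfalso
      have hv := havoid v (hsup v hx)
      cases c <;> simp_all
    | Sum.inr u, Sum.inr v =>
      exact congrArg Sum.inr (finj (hsup u hx) (hsup v hy) hxy)
  · intro e he
    rw [mem_twoLift] at he
    obtain ⟨u, v, huv, (rfl | rfl)⟩ := he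
    · have := (fhom u v huv).2.1
      simpa [Finset.image_insert] using this
    · have := (fhom u v huv).2.2
      simpa [Finset.image_insert] using this

lemma pair_min_max {β : Type*} [LinearOrder β] [DecidableEq β] {q : Finset β} (h2 : q.card = 2) (h : q.Nonempty) :
    q = {q.min' h, q.max' h} := by
  have hlt : q.min' h < q.max' h := Finset.min'_lt_max'_of_card q (by omega)
  refine (Finset.eq_of_subset_of_card_le ?_ ?_).symm
  · intro x hx
    simp only [Finset.mem_insert, Finset.mem_singleton] at hx
    rcases hx with rfl | rfl
    exacts [q.min'_mem h, q.max'_mem h]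
  · rw [h2, Finset.card_pair hlt.ne]

lemma codeg_le_edge {n : ℕ} (𝒢 : Finset (Finset (Fin n))) (a b : Fin n) :
    ((Finset.powersetCard 2 (univ : Finset (Fin n))).filter
        fun q => insert a q ∈ 𝒢 ∧ insert b q ∈ 𝒢).card
      ≤ (linkGraph 𝒢 a b).edgeFinset.card := by
  classical
  apply Finset.card_le_card_of_injOn
      (fun q => if h : q.Nonempty then s(q.min' h, q.max' h) else s(a, a))
  · intro q hq
    rw [Finset.mem_coe, Finset.mem_filter, Finset.mem_powersetCard_univ] at hq
    obtain ⟨h2, hqa, hqb⟩ := hq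
    have h : q.Nonempty := Finset.card_pos.1 (by omega)
    rw [Finset.mem_coe]
    beta_reduce
    rw [dif_pos h, SimpleGraph.mem_edgeFinset, SimpleGraph.mem_edgeSet]
    refine ⟨(Finset.min'_lt_max'_of_card q (by omega)).ne, ?_, ?_⟩
    · show insert a {q.min' h, q.max' h} ∈ 𝒢
      rwa [← pair_min_max h2 h]
    · show insert b {q.min' h, q.max' h} ∈ 𝒢
      rwa [← pair_min_max h2 h]
  · intro q1 hq1 q2 hq2 heq
    simp only [Finset.coe_filter, Set.mem_setOf_eq, Finset.mem_powersetCard_univ] at hq1 hq2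
    have h1 : q1.Nonempty := Finset.card_pos.1 (by omega)
    have h2 : q2.Nonempty := Finset.card_pos.1 (by omega)
    simp only [dif_pos h1, dif_pos h2, Sym2.eq_iff] at heq
    rcases heq with ⟨hm, hM⟩ | ⟨hm, hM⟩
    · rw [pair_min_max hq1.1 h1, pair_min_max hq2.1 h2, hm, hM]
    · rw [pair_min_max hq1.1 h1, pair_min_max hq2.1 h2, hm, hM, Finset.pair_comm]

lemma sum_deg {n : ℕ} (𝒢 : Finset (Finset (Fin n))) (h3 : ∀ e ∈ 𝒢, e.card = 3) :
    ∑ q ∈ Finset.powersetCard 2 (univ : Finset (Fin n)),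
      (univ.filter fun x => insert x q ∈ 𝒢).card = 3 * 𝒢.card := by
  classical
  have lhs : ∑ q ∈ Finset.powersetCard 2 (univ : Finset (Fin n)),
        (univ.filter fun x => insert x q ∈ 𝒢).card
      = ((Finset.powersetCard 2 (univ : Finset (Fin n)) ×ˢ univ).filter
          fun p => insert p.2 p.1 ∈ 𝒢).card := by
    rw [Finset.card_filter, Finset.sum_product]
    exact Finset.sum_congr rfl fun q _ => Finset.card_filter _ _
  have rhs : ((𝒢 ×ˢ univ).filter fun p : Finset (Fin n) × Fin n => p.2 ∈ p.1).card
      = 3 * 𝒢.card := by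
    rw [Finset.card_filter (fun p : Finset (Fin n) × Fin n => p.2 ∈ p.1), Finset.sum_product]
    rw [Finset.sum_congr rfl (fun e he => ?_), Finset.sum_const, smul_eq_mul, mul_comm]
    · rw [← Finset.card_filter]
      rw [Finset.filter_univ_mem]
      exact h3 e he
  rw [lhs, ← rhs]
  apply Finset.card_nbij' (fun p => (insert p.2 p.1, p.2)) (fun p => (p.1.erase p.2, p.2))
  · rintro ⟨q, x⟩ hp
    simp only [Finset.mem_coe, Finset.mem_filter, Finset.mem_product, Finset.mem_univ, and_true] at hp
    simp only [Finset.mem_coe, Finset.mem_filter, Finset.mem_product, Finset.mem_univ, and_true]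
    exact ⟨hp.2, Finset.mem_insert_self _ _⟩
  · rintro ⟨e, x⟩ hp
    simp only [Finset.mem_coe, Finset.mem_filter, Finset.mem_product, Finset.mem_univ, and_true] at hp
    obtain ⟨he, hx⟩ := hp
    simp only [Finset.mem_coe, Finset.mem_filter, Finset.mem_product, Finset.mem_univ, and_true,
      Finset.mem_powersetCard_univ]
    refine ⟨?_, ?_⟩
    · rw [Finset.card_erase_of_mem hx, h3 e he]
    · rwa [Finset.insert_erase hx]
  · rintro ⟨q, x⟩ hp
    simp only [Finset.mem_coe, Finset.mem_filter, Finset.mem_product, Finset.mem_powersetCard_univ,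
      Finset.mem_univ, and_true] at hp
    obtain ⟨h2, hmem⟩ := hp
    have hx : x ∉ q := by
      intro hxq
      rw [Finset.insert_eq_self.2 hxq] at hmem
      have := h3 _ hmem
      omega
    simp only [Prod.mk.injEq]
    exact ⟨Finset.erase_insert hx, trivial⟩
  · rintro ⟨e, x⟩ hp
    simp only [Finset.mem_coe, Finset.mem_filter, Finset.mem_product, Finset.mem_univ, and_true] at hp
    simp only [Prod.mk.injEq]
    exact ⟨Finset.insert_erase hp.2, trivial⟩

lemma sum_codeg {n : ℕ} (𝒢 : Finset (Finset (Fin n))) :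
    ∑ p ∈ (univ : Finset (Fin n)).offDiag,
        ((Finset.powersetCard 2 (univ : Finset (Fin n))).filter
          fun q => insert p.1 q ∈ 𝒢 ∧ insert p.2 q ∈ 𝒢).card
      = ∑ q ∈ Finset.powersetCard 2 (univ : Finset (Fin n)),
          ((univ.filter fun x => insert x q ∈ 𝒢).card *
            (univ.filter fun x => insert x q ∈ 𝒢).card
            - (univ.filter fun x => insert x q ∈ 𝒢).card) := by
  classical
  calc ∑ p ∈ (univ : Finset (Fin n)).offDiag,
        ((Finset.powersetCard 2 (univ : Finset (Fin n))).filter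
          fun q => insert p.1 q ∈ 𝒢 ∧ insert p.2 q ∈ 𝒢).card
      = ∑ p ∈ (univ : Finset (Fin n)).offDiag,
          ∑ q ∈ Finset.powersetCard 2 (univ : Finset (Fin n)),
            if insert p.1 q ∈ 𝒢 ∧ insert p.2 q ∈ 𝒢 then 1 else 0 :=
        Finset.sum_congr rfl fun p _ => Finset.card_filter _ _
    _ = ∑ q ∈ Finset.powersetCard 2 (univ : Finset (Fin n)),
          ∑ p ∈ (univ : Finset (Fin n)).offDiag,
            if insert p.1 q ∈ 𝒢 ∧ insert p.2 q ∈ 𝒢 then 1 else 0 := Finset.sum_comm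
    _ = ∑ q ∈ Finset.powersetCard 2 (univ : Finset (Fin n)),
          ((univ : Finset (Fin n)).offDiag.filter
            fun p => insert p.1 q ∈ 𝒢 ∧ insert p.2 q ∈ 𝒢).card :=
        Finset.sum_congr rfl fun q _ => (Finset.card_filter _ _).symm
    _ = _ := by
        refine Finset.sum_congr rfl fun q _ => ?_
        rw [show (univ : Finset (Fin n)).offDiag.filter
              (fun p => insert p.1 q ∈ 𝒢 ∧ insert p.2 q ∈ 𝒢)
            = (univ.filter fun x => insert x q ∈ 𝒢).offDiag from ?_, Finset.offDiag_card]
        ext ⟨x, y⟩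
        simp only [Finset.mem_filter, Finset.mem_offDiag, Finset.mem_univ, true_and]
        tauto


/-- If `H` is bipartite with graph Turán number `ex(n, H) = O(n ^ γ)`, then the 3-uniform
Turán number of a two-lift `𝓗` of `H` satisfies `ex(n, 𝓗) = O(n ^ ((γ + 4) / 2))`. -/
theorem twoLift_turan {α : Type*} [Fintype α] [DecidableEq α] (H : SimpleGraph α)
    [DecidableRel H.Adj] (hbip : H.Colorable 2) (γ : ℝ) (hγ : 0 < γ)
    (hH : ∃ C > 0, ∀ n : ℕ, ∀ G : SimpleGraph (Fin n),
      ¬ GContains H G → (G.edgeSet.ncard : ℝ) ≤ C * (n : ℝ) ^ γ) :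
    ∃ C > 0, ∀ n : ℕ, ∀ 𝒢 : Finset (Finset (Fin n)),
      (∀ e ∈ 𝒢, e.card = 3) → ¬ HContains (twoLift H) 𝒢 →
      (𝒢.card : ℝ) ≤ C * (n : ℝ) ^ ((γ + 4) / 2) := by
  classical
  obtain ⟨C, hC, hHb⟩ := hH
  refine ⟨max 1 (Real.sqrt (C / 6)), lt_of_lt_of_le one_pos (le_max_left _ _), ?_⟩
  intro n 𝒢 h3 hfree
  rcases Nat.eq_zero_or_pos n with rfl | hn
  · have hG : 𝒢 = ∅ := by
      rw [Finset.eq_empty_iff_forall_notMem]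
      intro e he
      have h1 := h3 e he
      have h2 : e.card ≤ 0 := le_trans (Finset.card_le_univ e) (by simp)
      omega
    subst hG
    simp [Real.zero_rpow (by positivity : (γ + 4) / 2 ≠ 0)]
  -- notation
  have hN1 : (1 : ℝ) ≤ (n : ℝ) := by exact_mod_cast hn
  have hN0 : (0 : ℝ) < (n : ℝ) := lt_of_lt_of_le one_pos hN1
  have hm0 : (0 : ℝ) ≤ (𝒢.card : ℝ) := Nat.cast_nonneg _
  have hRpos : (0 : ℝ) < (n : ℝ) ^ ((γ + 4) / 2) := Real.rpow_pos_of_pos hN0 _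
  -- codegree bound for each ordered pair
  have hcode : ∀ p ∈ (univ : Finset (Fin n)).offDiag,
      (((Finset.powersetCard 2 (univ : Finset (Fin n))).filter
        fun q => insert p.1 q ∈ 𝒢 ∧ insert p.2 q ∈ 𝒢).card : ℝ) ≤ C * (n : ℝ) ^ γ := by
    rintro ⟨a, b⟩ hp
    rw [Finset.mem_offDiag] at hp
    have hfree' := link_H_free H 𝒢 h3 hp.2.2 hfree
    have hbound := hHb n (linkGraph 𝒢 a b) hfree'
    rw [← SimpleGraph.coe_edgeFinset, Set.ncard_coe_finset] at hbound
    calc (((Finset.powersetCard 2 (univ : Finset (Fin n))).filter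
          fun q => insert a q ∈ 𝒢 ∧ insert b q ∈ 𝒢).card : ℝ)
        ≤ ((linkGraph 𝒢 a b).edgeFinset.card : ℝ) := by exact_mod_cast codeg_le_edge 𝒢 a b
      _ ≤ C * (n : ℝ) ^ γ := hbound
  -- bound on the total codegree sum
  have hT : ((∑ p ∈ (univ : Finset (Fin n)).offDiag,
        ((Finset.powersetCard 2 (univ : Finset (Fin n))).filter
          fun q => insert p.1 q ∈ 𝒢 ∧ insert p.2 q ∈ 𝒢).card : ℕ) : ℝ)
      ≤ ((n : ℝ) * n) * (C * (n : ℝ) ^ γ) := by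
    push_cast
    calc ∑ p ∈ (univ : Finset (Fin n)).offDiag,
          (((Finset.powersetCard 2 (univ : Finset (Fin n))).filter
            fun q => insert p.1 q ∈ 𝒢 ∧ insert p.2 q ∈ 𝒢).card : ℝ)
        ≤ ∑ _p ∈ (univ : Finset (Fin n)).offDiag, C * (n : ℝ) ^ γ :=
          Finset.sum_le_sum hcode
      _ = ((univ : Finset (Fin n)).offDiag.card : ℝ) * (C * (n : ℝ) ^ γ) := by
          rw [Finset.sum_const, nsmul_eq_mul]
      _ ≤ ((n : ℝ) * n) * (C * (n : ℝ) ^ γ) := by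
          refine mul_le_mul_of_nonneg_right ?_ (by positivity)
          rw [Finset.offDiag_card]
          calc (((univ : Finset (Fin n)).card * (univ : Finset (Fin n)).card
                - (univ : Finset (Fin n)).card : ℕ) : ℝ)
              ≤ (((univ : Finset (Fin n)).card * (univ : Finset (Fin n)).card : ℕ) : ℝ) := by
                exact_mod_cast Nat.sub_le _ _
            _ = (n : ℝ) * n := by simp
  -- ℕ identities
  have hsum1 : ∑ q ∈ Finset.powersetCard 2 (univ : Finset (Fin n)),
      (univ.filter fun x => insert x q ∈ 𝒢).card = 3 * 𝒢.card := sum_deg 𝒢 h3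
  have hle : ∀ k : ℕ, k ≤ k * k := by
    intro k
    cases k with
    | zero => simp
    | succ k => exact Nat.le_mul_of_pos_left _ (Nat.succ_pos _)
  have hsum2 : ∑ q ∈ Finset.powersetCard 2 (univ : Finset (Fin n)),
        (univ.filter fun x => insert x q ∈ 𝒢).card * (univ.filter fun x => insert x q ∈ 𝒢).card
      = (∑ p ∈ (univ : Finset (Fin n)).offDiag,
          ((Finset.powersetCard 2 (univ : Finset (Fin n))).filter
            fun q => insert p.1 q ∈ 𝒢 ∧ insert p.2 q ∈ 𝒢).card) + 3 * 𝒢.card := by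
    rw [sum_codeg 𝒢, ← hsum1, ← Finset.sum_add_distrib]
    exact Finset.sum_congr rfl fun q _ => (Nat.sub_add_cancel (hle _)).symm
  -- Cauchy-Schwarz in ℝ
  have hcs := sq_sum_le_card_mul_sum_sq (s := Finset.powersetCard 2 (univ : Finset (Fin n)))
    (f := fun q => ((univ.filter fun x => insert x q ∈ 𝒢).card : ℝ))
  have hsum1R : ∑ q ∈ Finset.powersetCard 2 (univ : Finset (Fin n)),
      ((univ.filter fun x => insert x q ∈ 𝒢).card : ℝ) = 3 * (𝒢.card : ℝ) := by
    exact_mod_cast congrArg (Nat.cast : ℕ → ℝ) hsum1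
  have hsum2R : ∑ q ∈ Finset.powersetCard 2 (univ : Finset (Fin n)),
      ((univ.filter fun x => insert x q ∈ 𝒢).card : ℝ) ^ 2
      = ((∑ p ∈ (univ : Finset (Fin n)).offDiag,
          ((Finset.powersetCard 2 (univ : Finset (Fin n))).filter
            fun q => insert p.1 q ∈ 𝒢 ∧ insert p.2 q ∈ 𝒢).card : ℕ) : ℝ) + 3 * (𝒢.card : ℝ) := by
    have := congrArg (Nat.cast : ℕ → ℝ) hsum2
    push_cast at this ⊢
    rw [← this]
    exact Finset.sum_congr rfl fun q _ => (sq _)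
  have hQcard : ((Finset.powersetCard 2 (univ : Finset (Fin n))).card : ℝ) ≤ (n : ℝ) * n := by
    rw [Finset.card_powersetCard, Finset.card_univ, Fintype.card_fin]
    have : n.choose 2 ≤ n * n := by
      rw [Nat.choose_two_right]
      exact le_trans (Nat.div_le_self _ _) (Nat.mul_le_mul_left n (Nat.sub_le n 1))
    exact_mod_cast this
  -- the key inequality
  have key : 9 * (𝒢.card : ℝ) ^ 2
      ≤ ((n : ℝ) * n) * (((n : ℝ) * n) * (C * (n : ℝ) ^ γ) + 3 * (𝒢.card : ℝ)) := by
    have h1 : (3 * (𝒢.card : ℝ)) ^ 2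
        ≤ ((Finset.powersetCard 2 (univ : Finset (Fin n))).card : ℝ)
          * (((∑ p ∈ (univ : Finset (Fin n)).offDiag,
              ((Finset.powersetCard 2 (univ : Finset (Fin n))).filter
                fun q => insert p.1 q ∈ 𝒢 ∧ insert p.2 q ∈ 𝒢).card : ℕ) : ℝ)
              + 3 * (𝒢.card : ℝ)) := by
      rw [← hsum2R, ← hsum1R]
      exact hcs
    have h2 : ((Finset.powersetCard 2 (univ : Finset (Fin n))).card : ℝ)
          * (((∑ p ∈ (univ : Finset (Fin n)).offDiag,
              ((Finset.powersetCard 2 (univ : Finset (Fin n))).filter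
                fun q => insert p.1 q ∈ 𝒢 ∧ insert p.2 q ∈ 𝒢).card : ℕ) : ℝ)
              + 3 * (𝒢.card : ℝ))
        ≤ ((n : ℝ) * n) * (((n : ℝ) * n) * (C * (n : ℝ) ^ γ) + 3 * (𝒢.card : ℝ)) := by
      refine mul_le_mul hQcard (by linarith) (by positivity) (by positivity)
    nlinarith [h1, h2]
  -- rpow algebra
  have hRR : (n : ℝ) ^ ((γ + 4) / 2) * (n : ℝ) ^ ((γ + 4) / 2)
      = ((n : ℝ) * n) * ((n : ℝ) * n) * (n : ℝ) ^ γ := by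
    have h4 : ((n : ℝ) * n) * ((n : ℝ) * n) = (n : ℝ) ^ ((4 : ℕ) : ℝ) := by
      rw [Real.rpow_natCast]
      ring
    calc (n : ℝ) ^ ((γ + 4) / 2) * (n : ℝ) ^ ((γ + 4) / 2)
        = (n : ℝ) ^ ((γ + 4) / 2 + (γ + 4) / 2) := (Real.rpow_add hN0 _ _).symm
      _ = (n : ℝ) ^ (((4 : ℕ) : ℝ) + γ) := by norm_num; ring_nf
      _ = (n : ℝ) ^ ((4 : ℕ) : ℝ) * (n : ℝ) ^ γ := Real.rpow_add hN0 _ _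
      _ = ((n : ℝ) * n) * ((n : ℝ) * n) * (n : ℝ) ^ γ := by rw [h4]
  by_cases hcase : (𝒢.card : ℝ) ≤ (n : ℝ) * n
  · have hNN : (n : ℝ) * n ≤ (n : ℝ) ^ ((γ + 4) / 2) := by
      have h2 : (n : ℝ) * n = (n : ℝ) ^ ((2 : ℕ) : ℝ) := by
        rw [Real.rpow_natCast]; ring
      rw [h2]
      exact Real.rpow_le_rpow_of_exponent_le hN1 (by norm_num; linarith)
    calc (𝒢.card : ℝ) ≤ (n : ℝ) * n := hcase
      _ ≤ (n : ℝ) ^ ((γ + 4) / 2) := hNN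
      _ = 1 * (n : ℝ) ^ ((γ + 4) / 2) := (one_mul _).symm
      _ ≤ max 1 (Real.sqrt (C / 6)) * (n : ℝ) ^ ((γ + 4) / 2) :=
          mul_le_mul_of_nonneg_right (le_max_left _ _) hRpos.le
  · push_neg at hcase
    have h6 : 6 * (𝒢.card : ℝ) ^ 2
        ≤ C * ((n : ℝ) ^ ((γ + 4) / 2) * (n : ℝ) ^ ((γ + 4) / 2)) := by
      rw [hRR]
      nlinarith [key, hcase, hm0,
        mul_nonneg (by linarith : (0:ℝ) ≤ (𝒢.card : ℝ) - (n : ℝ) * n)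
          (by linarith : (0:ℝ) ≤ 3 * (𝒢.card : ℝ))]
    have hm2 : (𝒢.card : ℝ) ^ 2 ≤ (Real.sqrt (C / 6) * (n : ℝ) ^ ((γ + 4) / 2)) ^ 2 := by
      rw [mul_pow, Real.sq_sqrt (by positivity : (0:ℝ) ≤ C / 6)]
      calc (𝒢.card : ℝ) ^ 2 ≤ C / 6 * ((n : ℝ) ^ ((γ + 4) / 2) * (n : ℝ) ^ ((γ + 4) / 2)) := by
            linarith
        _ = C / 6 * ((n : ℝ) ^ ((γ + 4) / 2)) ^ 2 := by ring
    calc (𝒢.card : ℝ) = Real.sqrt ((𝒢.card : ℝ) ^ 2) := (Real.sqrt_sq hm0).symm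
      _ ≤ Real.sqrt ((Real.sqrt (C / 6) * (n : ℝ) ^ ((γ + 4) / 2)) ^ 2) :=
          Real.sqrt_le_sqrt hm2
      _ = Real.sqrt (C / 6) * (n : ℝ) ^ ((γ + 4) / 2) := Real.sqrt_sq (by positivity)
      _ ≤ max 1 (Real.sqrt (C / 6)) * (n : ℝ) ^ ((γ + 4) / 2) :=
          mul_le_mul_of_nonneg_right (le_max_right _ _) hRpos.le
end

section
/- For every odd integer ℓ ≥ 7, the hypercube Q_n (for n large enough) contains a cycle of length 2ℓ all of whose vertices lie in layers 2 and 3 (i.e., vertices are 2-element and 3-element subsets of [n]), such that the 3-element vertices of the cycle, viewed as a 3-uniform hypergraph, form a 3-partite 3-graph. -/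
/-!
Take the 3-sets `{0, j+2, j+3}` for `j < 2a`, the triangles with apex `0` over the path
`2, 3, …, 2a+2`, and close the sequence up through the second apex `1` with
`{0, 3, 2a+2}, {1, 3, 2a+2}, {1, 2, 3}`: `ℓ = 2a + 3` sets in all. Consecutive 3-sets meet in
a 2-set, and inserting these 2-sets between them gives a cycle of length `2ℓ` in layers 2 and 3
once all the 3-sets and all the 2-sets are distinct (`{0, 3, 2a+2} ≠ {0, 3, 4}` needs `a ≥ 2`).
Every 3-set meets each of `{0, 1}`, the even numbers `≥ 2` and the odd numbers `≥ 3` once.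
-/

/-- The hypercube graph `Q_n`: vertices are subsets of `[n]`, with edges between `A ⊆ B`
with `|B| = |A| + 1`. -/
def Qgraph (n : ℕ) : SimpleGraph (Finset (Fin n)) where
  Adj A B := (A ⊆ B ∧ B.card = A.card + 1) ∨ (B ⊆ A ∧ A.card = B.card + 1)
  symm := by constructor; intro A B h; tauto
  loopless := by constructor; intro A h; rcases h with ⟨_, h⟩ | ⟨_, h⟩ <;> omega

open Finset

namespace SimpleGraph

theorem exists_isCycle_of_injOn {V : Type*} (G : SimpleGraph V) (f : ℕ → V) {m : ℕ}
    (hm : 3 ≤ m) (hf : f m = f 0) (hinj : Set.InjOn f (Set.Iio m))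
    (hadj : ∀ i < m, G.Adj (f i) (f (i + 1))) :
    ∃ p : G.Walk (f 0) (f 0), p.IsCycle ∧ p.length = m ∧ ∀ u ∈ p.support, ∃ i < m, u = f i := by
  obtain ⟨k, rfl⟩ : ∃ k, m = k + 3 := ⟨m - 3, by omega⟩
  have hsucc : ∀ i j : Fin (k + 3), j - i = 1 → G.Adj (f i) (f j) := by
    intro i j h
    obtain rfl := sub_eq_iff_eq_add'.1 h
    rw [Fin.val_add_one]
    split_ifs with hi
    · rw [← hf, hi]
      exact hadj _ (by simp)
    · exact hadj _ i.2
  let φ : cycleGraph (k + 3) →g G :=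
    ⟨fun i => f i, fun {i j} h => h.elim (fun h => (hsucc j i h).symm) (hsucc i j)⟩
  have hφ : Function.Injective φ := fun i j h => Fin.ext (hinj i.2 j.2 h)
  have h0 : φ 0 = f 0 := rfl
  refine ⟨((cycleGraph.cycle k).map φ).copy h0 h0, ?_, by simp, fun u hu => ?_⟩
  · exact (Walk.isCycle_copy _ _).2
      ((Walk.isCycle_map_iff_of_injective hφ).2 cycleGraph.isCycle_cycle)
  · rw [Walk.support_copy, Walk.support_map] at hu
    obtain ⟨i, -, rfl⟩ := List.mem_map.1 hu
    exact ⟨i, i.2, rfl⟩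

end SimpleGraph

structure IsLayerCycle {α : Type*} (ℓ : ℕ) (T S : ℕ → Finset α) : Prop where
  periodic : T ℓ = T 0
  card_T : ∀ j < ℓ, #(T j) = 3
  card_S : ∀ j < ℓ, #(S j) = 2
  S_subset_T : ∀ j < ℓ, S j ⊆ T j
  S_subset_T_succ : ∀ j < ℓ, S j ⊆ T (j + 1)
  injOn_T : Set.InjOn T (Set.Iio ℓ)
  injOn_S : Set.InjOn S (Set.Iio ℓ)

namespace IsLayerCycle

theorem exists_isCycle {n ℓ : ℕ} {T S : ℕ → Finset (Fin n)} (h : IsLayerCycle ℓ T S)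
    (hℓ : 2 ≤ ℓ) :
    ∃ p : (Qgraph n).Walk (T 0) (T 0), p.IsCycle ∧ p.length = 2 * ℓ ∧
      ∀ u ∈ p.support, ∃ j < ℓ, u = T j ∨ u = S j := by
  let f : ℕ → Finset (Fin n) := fun i => if i % 2 = 0 then T (i / 2) else S (i / 2)
  have f_even (j : ℕ) : f (2 * j) = T j := by simp [f]
  have f_odd (j : ℕ) : f (2 * j + 1) = S j := by simp [f, Nat.add_mod, Nat.add_div]
  have hinj : Set.InjOn f (Set.Iio (2 * ℓ)) := by
    intro i hi i' hi' hii'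
    simp only [Set.mem_Iio] at hi hi'
    obtain ⟨j, rfl | rfl⟩ := Nat.even_or_odd' i <;>
      obtain ⟨j', rfl | rfl⟩ := Nat.even_or_odd' i' <;> simp only [f_even, f_odd] at hii'
    · rw [h.injOn_T (by simp; omega) (by simp; omega) hii']
    · have := congrArg card hii'
      rw [h.card_T j (by omega), h.card_S j' (by omega)] at this
      omega
    · have := congrArg card hii'
      rw [h.card_S j (by omega), h.card_T j' (by omega)] at this
      omega
    · rw [h.injOn_S (by simp; omega) (by simp; omega) hii']
  have hadj : ∀ i < 2 * ℓ, (Qgraph n).Adj (f i) (f (i + 1)) := by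
    intro i hi
    obtain ⟨j, rfl | rfl⟩ := Nat.even_or_odd' i
    · rw [f_even, f_odd]
      refine Or.inr ⟨h.S_subset_T j (by omega), ?_⟩
      rw [h.card_T j (by omega), h.card_S j (by omega)]
    · rw [f_odd, show 2 * j + 1 + 1 = 2 * (j + 1) by ring, f_even]
      refine Or.inl ⟨h.S_subset_T_succ j (by omega), ?_⟩
      rw [h.card_S j (by omega)]
      obtain hj | hj := Nat.lt_or_ge (j + 1) ℓ
      · rw [h.card_T _ hj]
      · rw [show j + 1 = ℓ by omega, h.periodic, h.card_T 0 (by omega)]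
  obtain ⟨p, hp, hlen, hsupp⟩ := SimpleGraph.exists_isCycle_of_injOn _ f (by omega)
    (by rw [f_even, h.periodic, ← f_even, mul_zero]) hinj hadj
  refine ⟨p, hp, hlen, fun u hu => ?_⟩
  obtain ⟨i, hi, rfl⟩ := hsupp u hu
  obtain ⟨j, rfl | rfl⟩ := Nat.even_or_odd' i
  exacts [⟨j, by omega, Or.inl (f_even j)⟩, ⟨j, by omega, Or.inr (f_odd j)⟩]

end IsLayerCycle

section toFin

variable {n : ℕ} {s t : Finset ℕ}

def toFin (n : ℕ) (s : Finset ℕ) : Finset (Fin n) := {i | (i : ℕ) ∈ s}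

theorem mem_toFin {i : Fin n} : i ∈ toFin n s ↔ (i : ℕ) ∈ s := by simp [toFin]

theorem map_toFin (hs : s ⊆ range n) : (toFin n s).map Fin.valEmbedding = s := by
  ext k
  simp only [mem_map, mem_toFin, Fin.valEmbedding_apply]
  exact ⟨by rintro ⟨i, hi, rfl⟩; exact hi, fun hk => ⟨⟨k, mem_range.1 (hs hk)⟩, hk, rfl⟩⟩

theorem card_toFin (hs : s ⊆ range n) : #(toFin n s) = #s := by
  rw [← card_map Fin.valEmbedding, map_toFin hs]

theorem toFin_mono (h : s ⊆ t) : toFin n s ⊆ toFin n t :=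
  fun _ hi => mem_toFin.2 (h (mem_toFin.1 hi))

theorem toFin_injOn : Set.InjOn (toFin n) {s | s ⊆ range n} := fun s hs t ht h => by
  rw [← map_toFin hs, ← map_toFin ht, h]

end toFin

theorem IsLayerCycle.toFin {n ℓ : ℕ} {T S : ℕ → Finset ℕ} (h : IsLayerCycle ℓ T S)
    (hT : ∀ j < ℓ, T j ⊆ range n) : IsLayerCycle ℓ (toFin n ∘ T) (toFin n ∘ S) where
  periodic := by rw [Function.comp_apply, h.periodic, Function.comp_apply]
  card_T j hj := by rw [Function.comp_apply, card_toFin (hT j hj), h.card_T j hj]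
  card_S j hj := by
    rw [Function.comp_apply, card_toFin ((h.S_subset_T j hj).trans (hT j hj)), h.card_S j hj]
  S_subset_T j hj := toFin_mono (h.S_subset_T j hj)
  S_subset_T_succ j hj := toFin_mono (h.S_subset_T_succ j hj)
  injOn_T := toFin_injOn.comp h.injOn_T fun j hj => hT j hj
  injOn_S := toFin_injOn.comp h.injOn_S fun j hj => (h.S_subset_T j hj).trans (hT j hj)

-- The last branch closes the sequence up: `cycleThreeSet a (2 * a + 3) = cycleThreeSet a 0`.
def cycleThreeSet (a j : ℕ) : Finset ℕ :=
  if j < 2 * a then {0, j + 2, j + 3}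
  else if j = 2 * a then {0, 3, 2 * a + 2}
  else if j = 2 * a + 1 then {1, 3, 2 * a + 2}
  else if j = 2 * a + 2 then {1, 2, 3}
  else {0, 2, 3}

def cycleTwoSet (a j : ℕ) : Finset ℕ :=
  if j < 2 * a then {0, j + 3}
  else if j = 2 * a then {3, 2 * a + 2}
  else if j = 2 * a + 1 then {1, 3}
  else {2, 3}

theorem isLayerCycle_cycleSets {a : ℕ} (ha : 2 ≤ a) :
    IsLayerCycle (2 * a + 3) (cycleThreeSet a) (cycleTwoSet a) where
  periodic := by simp [cycleThreeSet]; omega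
  card_T j _ := by
    unfold cycleThreeSet
    split_ifs <;> exact card_eq_three.2 ⟨_, _, _, by omega, by omega, by omega, rfl⟩
  card_S j _ := by
    unfold cycleTwoSet
    split_ifs <;> exact card_eq_two.2 ⟨_, _, by omega, rfl⟩
  S_subset_T j _ := by
    unfold cycleTwoSet cycleThreeSet
    split_ifs <;> simp [insert_subset_iff]
  S_subset_T_succ j _ := by
    unfold cycleTwoSet cycleThreeSet
    split_ifs <;>
      simp only [insert_subset_iff, singleton_subset_iff, mem_insert, mem_singleton, true_or,
        or_true, and_true, true_and] <;> omega
  injOn_T j hj k hk h := by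
    have h₁ := h.le
    have h₂ := h.ge
    simp only [Set.mem_Iio] at hj hk
    unfold cycleThreeSet at h₁ h₂
    split_ifs at h₁ h₂ <;>
      simp only [insert_subset_iff, singleton_subset_iff, mem_insert, mem_singleton] at h₁ h₂ <;>
      omega
  injOn_S j hj k hk h := by
    have h₁ := h.le
    have h₂ := h.ge
    simp only [Set.mem_Iio] at hj hk
    unfold cycleTwoSet at h₁ h₂
    split_ifs at h₁ h₂ <;>
      simp only [insert_subset_iff, singleton_subset_iff, mem_insert, mem_singleton] at h₁ h₂ <;>
      omega

theorem cycleThreeSet_subset_range {a : ℕ} (ha : 0 < a) (j : ℕ) :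
    cycleThreeSet a j ⊆ range (2 * a + 3) := by
  unfold cycleThreeSet
  split_ifs <;> simp only [insert_subset_iff, singleton_subset_iff, mem_range] <;> omega

def partOf (k : ℕ) : ℕ := if k < 2 then 2 else k % 2

theorem partOf_lt_three (k : ℕ) : partOf k < 3 := by
  unfold partOf
  split_ifs <;> omega

theorem injOn_partOf_cycleThreeSet (a j : ℕ) : Set.InjOn partOf (cycleThreeSet a j) := by
  intro k hk k' hk' h
  simp only [partOf] at h
  unfold cycleThreeSet at hk hk'
  split_ifs at hk hk' <;> simp only [coe_insert, coe_singleton, Set.mem_insert_iff,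
    Set.mem_singleton_iff] at hk hk' <;> split_ifs at h <;> omega

theorem card_toFin_inter_fiber_le_one {n c : ℕ} {s : Finset ℕ} {g : ℕ → ℕ}
    (hg : Set.InjOn g s) : #(toFin n s ∩ ({i | g i = c} : Finset (Fin n))) ≤ 1 :=
  card_le_one.2 fun x hx y hy => by
    simp only [mem_inter, mem_filter, mem_univ, true_and, mem_toFin] at hx hy
    exact Fin.ext (hg hx.1 hy.1 (hx.2.trans hy.2.symm))

/-- For every odd `ℓ ≥ 7` and `n` large enough, `Q_n` contains a cycle of length `2ℓ` all
of whose vertices lie in layers 2 and 3, such that its 3-element vertices form the edge set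
of a 3-partite 3-uniform hypergraph. -/
theorem cycle_in_layers_two_three (ℓ : ℕ) (hℓ : 7 ≤ ℓ) (hodd : Odd ℓ) :
    ∃ n₀ : ℕ, ∀ n ≥ n₀, ∃ (v : Finset (Fin n)) (p : (Qgraph n).Walk v v),
      p.IsCycle ∧ p.length = 2 * ℓ ∧
      (∀ u ∈ p.support, u.card = 2 ∨ u.card = 3) ∧
      ∃ P₁ P₂ P₃ : Finset (Fin n),
        Disjoint P₁ P₂ ∧ Disjoint P₁ P₃ ∧ Disjoint P₂ P₃ ∧
        ∀ u ∈ p.support, u.card = 3 →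
          u ⊆ P₁ ∪ P₂ ∪ P₃ ∧ (u ∩ P₁).card ≤ 1 ∧ (u ∩ P₂).card ≤ 1 ∧
            (u ∩ P₃).card ≤ 1 := by
  obtain ⟨a, ha, rfl⟩ : ∃ a, 2 ≤ a ∧ ℓ = 2 * a + 3 := by
    obtain ⟨c, rfl⟩ := hodd
    exact ⟨c - 1, by omega, by omega⟩
  refine ⟨2 * a + 3, fun n hn => ?_⟩
  have hcyc := (isLayerCycle_cycleSets ha).toFin fun j _ =>
    (cycleThreeSet_subset_range (by omega) j).trans (range_subset_range.2 hn)
  obtain ⟨p, hp, hlen, hsupp⟩ := hcyc.exists_isCycle (by omega)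
  let P (c : ℕ) : Finset (Fin n) := {i | partOf i = c}
  have hdisj {c c' : ℕ} (h : c ≠ c') : Disjoint (P c) (P c') :=
    disjoint_filter.2 fun _ _ h₁ h₂ => h (h₁.symm.trans h₂)
  refine ⟨_, p, hp, hlen, fun u hu => ?_, P 0, P 1, P 2, hdisj (by decide), hdisj (by decide),
    hdisj (by decide), fun u hu hu3 => ?_⟩
  · obtain ⟨j, hj, rfl | rfl⟩ := hsupp u hu
    exacts [Or.inr (hcyc.card_T j hj), Or.inl (hcyc.card_S j hj)]
  · obtain ⟨j, hj, rfl | rfl⟩ := hsupp u hu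
    · have hpart := injOn_partOf_cycleThreeSet a j
      refine ⟨fun i _ => ?_, card_toFin_inter_fiber_le_one hpart,
        card_toFin_inter_fiber_le_one hpart, card_toFin_inter_fiber_le_one hpart⟩
      have := partOf_lt_three i
      simp only [P, mem_union, mem_filter, mem_univ, true_and]
      omega
    · exact absurd (hcyc.card_S j hj ▸ hu3).symm (by decide)
end
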